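/- arXiv:2407.06887 — 6 statements merged into one kernel-verified Lean document; each statement's English description precedes it below -/
import Mathlib

section
/- Let X be a nonnegative integrable random variable with E(X) ≤ 1, Pr(X = 0) = 1 − p, Pr(X ≥ 1) = p for some p ∈ (0, 1/3], and let λ > 1/(2(1−p)). Then E(X) − λ·E(|X − E(X)|) ≤ 0, with equality if and only if E(X) = 0. -/
open MeasureTheory

/-!
Write `m = E X ≥ 0`. On `{X = 0}` we have `|X - m| = (X - m) + 2m`, and elsewhere
`|X - m| ≥ X - m`; integrating, `E|X - m| ≥ 2m · Pr(X = 0) = 2m(1 - p)`. Hence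
`E X - λ E|X - m| ≤ m (1 - 2λ(1 - p))`, which is negative as soon as `m > 0`.
-/

lemma sub_add_indicator_le_abs_sub {x m : ℝ} (hm : 0 ≤ m) :
    x - m + ({0} : Set ℝ).indicator (fun _ => 2 * m) x ≤ |x - m| := by
  by_cases hx : x = 0
  · simp [hx, abs_of_nonneg hm, two_mul]
  · simpa [hx] using le_abs_self (x - m)

lemma two_mul_integral_mul_measureReal_le_integral_abs_sub_integral {Ω : Type*}
    [MeasurableSpace Ω] {μ : Measure Ω} [IsProbabilityMeasure μ] {X : Ω → ℝ}
    (hX : Integrable X μ) (hm : 0 ≤ ∫ ω, X ω ∂μ) :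
    2 * (∫ ω, X ω ∂μ) * μ.real {ω | X ω = 0} ≤
      ∫ ω, |X ω - ∫ ω', X ω' ∂μ| ∂μ := by
  set m := ∫ ω, X ω ∂μ
  set Z : Set Ω := {ω | X ω = 0}
  have hZ : NullMeasurableSet Z μ :=
    hX.aemeasurable.nullMeasurableSet_preimage (measurableSet_singleton 0)
  have hInd : Integrable (Z.indicator fun _ => 2 * m) μ :=
    (integrable_const _).indicator₀ hZ
  have hcentered : Integrable (fun ω => X ω - m) μ := hX.sub (integrable_const m)
  calc 2 * m * μ.real Z
      = ∫ ω, (X ω - m + Z.indicator (fun _ => 2 * m) ω) ∂μ := by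
        rw [integral_add hcentered hInd, integral_sub hX (integrable_const m),
          integral_indicator₀ hZ, setIntegral_const, integral_const]
        simp only [probReal_univ, smul_eq_mul]
        ring
    _ ≤ ∫ ω, |X ω - m| ∂μ :=
        integral_mono (hcentered.add hInd) hcentered.abs fun ω =>
          sub_add_indicator_le_abs_sub (x := X ω) hm

theorem madpe_nonpos_general {Ω : Type*} [MeasurableSpace Ω] (μ : Measure Ω)
    [IsProbabilityMeasure μ] (X : Ω → ℝ) (hX : Integrable X μ)
    (hpos : ∀ ω, 0 ≤ X ω)
    (p : ℝ) (hp : p ∈ Set.Ioc 0 (1/3 : ℝ))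
    (hzero : μ {ω | X ω = 0} = ENNReal.ofReal (1 - p))
    (lam : ℝ) (hlam : 1 / (2 * (1 - p)) < lam) :
    (∫ ω, X ω ∂μ) - lam * (∫ ω, |X ω - ∫ ω', X ω' ∂μ| ∂μ) ≤ 0
      ∧ ((∫ ω, X ω ∂μ) - lam * (∫ ω, |X ω - ∫ ω', X ω' ∂μ| ∂μ) = 0
          ↔ (∫ ω, X ω ∂μ) = 0) := by
  set m := ∫ ω, X ω ∂μ
  have hq : 0 < 1 - p := by linarith [hp.2]
  have hm : 0 ≤ m := integral_nonneg hpos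
  have hlam₀ : 0 < lam := lt_trans (by positivity) hlam
  have hlam₁ : 1 < 2 * lam * (1 - p) := by
    rw [div_lt_iff₀ (by positivity)] at hlam
    linarith
  have hmad : 2 * m * (1 - p) ≤ ∫ ω, |X ω - m| ∂μ := by
    simpa [measureReal_def, hzero, hq.le] using
      two_mul_integral_mul_measureReal_le_integral_abs_sub_integral hX hm
  have hbound : m - lam * ∫ ω, |X ω - m| ∂μ ≤ m * (1 - 2 * lam * (1 - p)) := by
    nlinarith [mul_le_mul_of_nonneg_left hmad hlam₀.le]
  refine ⟨hbound.trans (mul_nonpos_of_nonneg_of_nonpos hm (by linarith)),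
    fun h => ?_, fun h => ?_⟩
  · by_contra hne
    nlinarith [mul_lt_mul_of_pos_left hlam₁ (lt_of_le_of_ne hm (Ne.symm hne))]
  · have hmad_zero : ∫ ω, |X ω - m| ∂μ = 0 := by
      simp only [h, sub_zero, abs_of_nonneg (hpos _)]
      exact h
    rw [hmad_zero, h, mul_zero, sub_zero]

/-- For a nonnegative integrable X with E(X) ≤ 1, Pr(X = 0) = 1 - p, Pr(X ≥ 1) = p,
    p ∈ (0, 1/3], and λ > 1/(2(1-p)), the MAD-penalized expectation is ≤ 0,
    with equality iff E(X) = 0. -/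
theorem madpe_nonpos {Ω : Type*} [MeasurableSpace Ω] (μ : Measure Ω)
    [IsProbabilityMeasure μ] (X : Ω → ℝ) (hX : Integrable X μ)
    (hpos : ∀ ω, 0 ≤ X ω) (hE : (∫ ω, X ω ∂μ) ≤ 1)
    (p : ℝ) (hp : p ∈ Set.Ioc 0 (1/3 : ℝ))
    (hzero : μ {ω | X ω = 0} = ENNReal.ofReal (1 - p))
    (hone : μ {ω | 1 ≤ X ω} = ENNReal.ofReal p)
    (lam : ℝ) (hlam : 1 / (2 * (1 - p)) < lam) :
    (∫ ω, X ω ∂μ) - lam * (∫ ω, |X ω - ∫ ω', X ω' ∂μ| ∂μ) ≤ 0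
      ∧ ((∫ ω, X ω ∂μ) - lam * (∫ ω, |X ω - ∫ ω', X ω' ∂μ| ∂μ) = 0
          ↔ (∫ ω, X ω ∂μ) = 0) :=
  madpe_nonpos_general μ X hX hpos p hp hzero lam hlam
end

section
/- For the family of random variables X_p (p ∈ [0,1]) taking value 0 with probability p/4, value 1 with probability 3/4, and value 2 with probability (1−p)/4, the MAD-penalized expectation with penalty factor λ = 4 satisfies: E(X_{1/2}) − 4·MAD(X_{1/2}) = 0, while E(X_0) − 4·MAD(X_0) = −1/4 and E(X_1) − 4·MAD(X_1) = −3/4. In particular, the value at p = 1/2 strictly exceeds the values at both p = 0 and p = 1. -/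
open MeasureTheory

/-- The distribution of X_p: value 0 with probability p/4, value 1 with probability 3/4,
    value 2 with probability (1-p)/4. -/
noncomputable def muX (p : ℝ) : Measure ℝ :=
  ENNReal.ofReal (p/4) • Measure.dirac 0 + ENNReal.ofReal (3/4) • Measure.dirac 1 +
    ENNReal.ofReal ((1-p)/4) • Measure.dirac 2

/-- E(X_p). -/
noncomputable def EX (p : ℝ) : ℝ := ∫ x, x ∂(muX p)

/-- MAD(X_p). -/
noncomputable def MADX (p : ℝ) : ℝ := ∫ x, |x - EX p| ∂(muX p)

lemma integral_muX (p : ℝ) (hp0 : 0 ≤ p) (hp1 : p ≤ 1) (f : ℝ → ℝ) :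
    ∫ x, f x ∂(muX p) = p/4 * f 0 + 3/4 * f 1 + (1-p)/4 * f 2 := by
  have hd : ∀ a : ℝ, Integrable f (Measure.dirac a) :=
    fun a => (integrable_const (f a)).congr (ae_eq_dirac f).symm
  have hs : ∀ (a c : ℝ), Integrable f (ENNReal.ofReal c • Measure.dirac a) :=
    fun a c => (hd a).smul_measure ENNReal.ofReal_ne_top
  unfold muX
  rw [integral_add_measure, integral_add_measure, integral_smul_measure,
    integral_smul_measure, integral_smul_measure, integral_dirac, integral_dirac,
    integral_dirac, ENNReal.toReal_ofReal (by linarith), ENNReal.toReal_ofReal (by norm_num),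
    ENNReal.toReal_ofReal (by linarith)]
  · simp [smul_eq_mul]
  all_goals first
    | exact hs _ _
    | exact (hs 0 _).add_measure (hs 1 _)

lemma EX_eq (p : ℝ) (hp0 : 0 ≤ p) (hp1 : p ≤ 1) : EX p = (5 - 2*p)/4 := by
  unfold EX
  rw [integral_muX p hp0 hp1 (fun x => x)]
  ring

lemma MADX_eq (p : ℝ) (hp0 : 0 ≤ p) (hp1 : p ≤ 1) :
    MADX p = p/4 * |0 - EX p| + 3/4 * |1 - EX p| + (1-p)/4 * |2 - EX p| := by
  unfold MADX
  exact integral_muX p hp0 hp1 (fun x => |x - EX p|)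

/-- For λ = 4: the MADPE is 0 at p = 1/2, -1/4 at p = 0 and -3/4 at p = 1;
    in particular the value at p = 1/2 strictly exceeds the values at both endpoints. -/
theorem madpe_randomized_better :
    EX (1/2) - 4 * MADX (1/2) = 0
      ∧ EX 0 - 4 * MADX 0 = -(1/4)
      ∧ EX 1 - 4 * MADX 1 = -(3/4)
      ∧ EX 0 - 4 * MADX 0 < EX (1/2) - 4 * MADX (1/2)
      ∧ EX 1 - 4 * MADX 1 < EX (1/2) - 4 * MADX (1/2) := by
  have e1 : EX (1/2) = 1 := by rw [EX_eq (1/2) (by norm_num) (by norm_num)]; norm_num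
  have e0 : EX 0 = 5/4 := by rw [EX_eq 0 le_rfl (by norm_num)]; norm_num
  have e2 : EX 1 = 3/4 := by rw [EX_eq 1 (by norm_num) le_rfl]; norm_num
  have m1 : MADX (1/2) = 1/4 := by
    rw [MADX_eq (1/2) (by norm_num) (by norm_num), e1]
    rw [show |(0:ℝ) - 1| = 1 by rw [abs_sub_comm]; norm_num,
      show |(1:ℝ) - 1| = 0 by norm_num, show |(2:ℝ) - 1| = 1 by norm_num]
    norm_num
  have m0 : MADX 0 = 3/8 := by
    rw [MADX_eq 0 le_rfl (by norm_num), e0]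
    rw [show |(0:ℝ) - 5/4| = 5/4 by rw [abs_sub_comm]; norm_num,
      show |(1:ℝ) - 5/4| = 1/4 by rw [abs_sub_comm]; norm_num,
      show |(2:ℝ) - 5/4| = 3/4 by norm_num]
    norm_num
  have m2 : MADX 1 = 3/8 := by
    rw [MADX_eq 1 (by norm_num) le_rfl, e2]
    rw [show |(0:ℝ) - 3/4| = 3/4 by rw [abs_sub_comm]; norm_num,
      show |(1:ℝ) - 3/4| = 1/4 by norm_num, show |(2:ℝ) - 3/4| = 5/4 by norm_num]
    norm_num
  rw [e1, e0, e2, m1, m0, m2]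
  norm_num
end

section
/- Let X and Y be integrable random variables on the same probability space, let A be an event with probability q, and suppose: X = Y outside A, Y ≥ X everywhere, and on A both X and Y take only values ≥ max(E(X), E(Y)). Then MAD(Y) − MAD(X) ≤ 2·E((Y − X)·1_A) = 2·(E(Y) − E(X)). -/
/-!
The mean absolute deviation is `2`-Lipschitz for the `L¹` distance: pointwise
`|Y - E Y| - |X - E X| ≤ |Y - X| + |E Y - E X|`, and `|E Y - E X| ≤ E |Y - X|`.
When `X ≤ Y` and `Y - X` vanishes outside `A`, `E |Y - X| = E ((Y - X) 1_A) = E Y - E X`.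
-/

open MeasureTheory

noncomputable def meanAbsDev {Ω : Type*} [MeasurableSpace Ω] (μ : Measure Ω) (X : Ω → ℝ) : ℝ :=
  ∫ ω, |X ω - ∫ ω', X ω' ∂μ| ∂μ

theorem meanAbsDev_sub_le_two_mul_integral_abs_sub {Ω : Type*} [MeasurableSpace Ω]
    {μ : Measure Ω} [IsProbabilityMeasure μ] {X Y : Ω → ℝ}
    (hX : Integrable X μ) (hY : Integrable Y μ) :
    meanAbsDev μ Y - meanAbsDev μ X ≤ 2 * ∫ ω, |Y ω - X ω| ∂μ := by
  set EX := ∫ ω, X ω ∂μ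
  set EY := ∫ ω, Y ω ∂μ
  have hdevX : Integrable (fun ω => |X ω - EX|) μ := (hX.sub (integrable_const EX)).abs
  have hdevY : Integrable (fun ω => |Y ω - EY|) μ := (hY.sub (integrable_const EY)).abs
  have hdist : Integrable (fun ω => |Y ω - X ω|) μ := (hY.sub hX).abs
  have hpointwise : ∀ ω, |Y ω - EY| - |X ω - EX| ≤ |Y ω - X ω| + |EY - EX| := fun ω =>
    calc |Y ω - EY| - |X ω - EX| ≤ |(Y ω - EY) - (X ω - EX)| := abs_sub_abs_le_abs_sub _ _
      _ = |(Y ω - X ω) - (EY - EX)| := by ring_nf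
      _ ≤ |Y ω - X ω| + |EY - EX| := abs_sub _ _
  have hmeans : |EY - EX| ≤ ∫ ω, |Y ω - X ω| ∂μ := by
    rw [← integral_sub hY hX]
    exact abs_integral_le_integral_abs
  calc meanAbsDev μ Y - meanAbsDev μ X = ∫ ω, (|Y ω - EY| - |X ω - EX|) ∂μ :=
        (integral_sub hdevY hdevX).symm
    _ ≤ ∫ ω, (|Y ω - X ω| + |EY - EX|) ∂μ :=
        integral_mono (hdevY.sub hdevX) (hdist.add (integrable_const _)) hpointwise
    _ = ∫ ω, |Y ω - X ω| ∂μ + |EY - EX| := by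
        rw [integral_add hdist (integrable_const _), integral_const, probReal_univ, one_smul]
    _ ≤ 2 * ∫ ω, |Y ω - X ω| ∂μ := by linarith

theorem mad_diff_le_general {Ω : Type*} [MeasurableSpace Ω] (μ : Measure Ω)
    [IsProbabilityMeasure μ] (X Y : Ω → ℝ) (hX : Integrable X μ) (hY : Integrable Y μ)
    (A : Set Ω)
    (heq : ∀ ω ∉ A, X ω = Y ω)
    (hle : ∀ ω, X ω ≤ Y ω) :
    (∫ ω, |Y ω - ∫ ω', Y ω' ∂μ| ∂μ) - (∫ ω, |X ω - ∫ ω', X ω' ∂μ| ∂μ)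
        ≤ 2 * ∫ ω, A.indicator (fun ω' => Y ω' - X ω') ω ∂μ
      ∧ (∫ ω, A.indicator (fun ω' => Y ω' - X ω') ω ∂μ)
          = (∫ ω, Y ω ∂μ) - ∫ ω, X ω ∂μ := by
  have hindicator : A.indicator (fun ω => Y ω - X ω) = fun ω => Y ω - X ω :=
    Set.indicator_eq_self.2 fun ω hω =>
      by_contra fun hωA => hω (sub_eq_zero.2 (heq ω hωA).symm)
  have hdiff : ∫ ω, (Y ω - X ω) ∂μ = (∫ ω, Y ω ∂μ) - ∫ ω, X ω ∂μ := integral_sub hY hX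
  rw [hindicator, hdiff]
  refine ⟨?_, rfl⟩
  calc meanAbsDev μ Y - meanAbsDev μ X ≤ 2 * ∫ ω, |Y ω - X ω| ∂μ :=
        meanAbsDev_sub_le_two_mul_integral_abs_sub hX hY
    _ = 2 * ((∫ ω, Y ω ∂μ) - ∫ ω, X ω ∂μ) := by
        simp_rw [abs_of_nonneg (sub_nonneg.2 (hle _))]
        rw [hdiff]

/-- If X = Y outside A, Y ≥ X everywhere, and on A both X and Y take only values
    ≥ max(E(X), E(Y)), then MAD(Y) - MAD(X) ≤ 2·E((Y - X)·1_A) = 2·(E(Y) - E(X)). -/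
theorem mad_diff_le {Ω : Type*} [MeasurableSpace Ω] (μ : Measure Ω)
    [IsProbabilityMeasure μ] (X Y : Ω → ℝ) (hX : Integrable X μ) (hY : Integrable Y μ)
    (A : Set Ω) (hA : MeasurableSet A)
    (heq : ∀ ω ∉ A, X ω = Y ω)
    (hle : ∀ ω, X ω ≤ Y ω)
    (hbig : ∀ ω ∈ A, max (∫ ω', X ω' ∂μ) (∫ ω', Y ω' ∂μ) ≤ X ω) :
    (∫ ω, |Y ω - ∫ ω', Y ω' ∂μ| ∂μ) - (∫ ω, |X ω - ∫ ω', X ω' ∂μ| ∂μ)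
        ≤ 2 * ∫ ω, A.indicator (fun ω' => Y ω' - X ω') ω ∂μ
      ∧ (∫ ω, A.indicator (fun ω' => Y ω' - X ω') ω ∂μ)
          = (∫ ω, Y ω ∂μ) - ∫ ω, X ω ∂μ :=
  mad_diff_le_general μ X Y hX hY A heq hle
end

section
/- Let X and Y be integrable random variables on the same probability space with X = Y outside an event A, Y ≥ X everywhere, and X ≥ max(E(X), E(Y)) on A. Then for every λ ∈ (0, 1/2], the MAD-penalized expectations satisfy E(Y) − λ·MAD(Y) ≥ E(X) − λ·MAD(X). -/
open MeasureTheory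

/-- If X = Y outside A, Y ≥ X everywhere, and X ≥ max(E(X), E(Y)) on A, then for every
    λ ∈ (0, 1/2] the MAD-penalized expectation of Y is at least that of X. -/
theorem madpe_monotone {Ω : Type*} [MeasurableSpace Ω] (μ : Measure Ω)
    [IsProbabilityMeasure μ] (X Y : Ω → ℝ) (hX : Integrable X μ) (hY : Integrable Y μ)
    (A : Set Ω) (hA : MeasurableSet A)
    (heq : ∀ ω ∉ A, X ω = Y ω)
    (hle : ∀ ω, X ω ≤ Y ω)
    (hbig : ∀ ω ∈ A, max (∫ ω', X ω' ∂μ) (∫ ω', Y ω' ∂μ) ≤ X ω) :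
    ∀ lam ∈ Set.Ioc (0:ℝ) (1/2),
      (∫ ω, X ω ∂μ) - lam * (∫ ω, |X ω - ∫ ω', X ω' ∂μ| ∂μ)
        ≤ (∫ ω, Y ω ∂μ) - lam * (∫ ω, |Y ω - ∫ ω', Y ω' ∂μ| ∂μ) := by
  intro lam hlam
  obtain ⟨hl0, hl2⟩ := hlam
  set EX := ∫ ω', X ω' ∂μ with hEX
  set EY := ∫ ω', Y ω' ∂μ with hEY
  have hEle : EX ≤ EY := integral_mono hX hY hle
  -- pointwise bound
  have hpt : ∀ ω, |Y ω - EY| ≤ |X ω - EX| + ((Y ω - X ω) + (EY - EX)) := by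
    intro ω
    by_cases hω : ω ∈ A
    · have h1 := hbig ω hω
      have hX1 : EX ≤ X ω := le_trans (le_max_left _ _) h1
      have hX2 : EY ≤ X ω := le_trans (le_max_right _ _) h1
      have hY2 : EY ≤ Y ω := le_trans hX2 (hle ω)
      rw [abs_of_nonneg (by linarith), abs_of_nonneg (by linarith)]
      linarith
    · have h := heq ω hω
      rw [← h]
      have h2 : |X ω - EY| ≤ |X ω - EX| + |EX - EY| := abs_sub_le _ _ _
      have h3 : |EX - EY| = EY - EX := by
        rw [abs_of_nonpos (by linarith)]; ring
      rw [h3] at h2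
      linarith
  -- integrability
  have hiX : Integrable (fun ω => |X ω - EX|) μ := (hX.sub (integrable_const EX)).abs
  have hiY : Integrable (fun ω => |Y ω - EY|) μ := (hY.sub (integrable_const EY)).abs
  have hiR : Integrable (fun ω => |X ω - EX| + ((Y ω - X ω) + (EY - EX))) μ :=
    hiX.add ((hY.sub hX).add (integrable_const _))
  have hint : (∫ ω, |Y ω - EY| ∂μ) ≤ ∫ ω, |X ω - EX| + ((Y ω - X ω) + (EY - EX)) ∂μ :=
    integral_mono hiY hiR hpt
  have hi1 : Integrable (fun ω => Y ω - X ω) μ := hY.sub hX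
  have hi2 : Integrable (fun ω => (Y ω - X ω) + (EY - EX)) μ := hi1.add (integrable_const _)
  have e1 : (∫ ω, |X ω - EX| + ((Y ω - X ω) + (EY - EX)) ∂μ)
      = (∫ ω, |X ω - EX| ∂μ) + ∫ ω, (Y ω - X ω) + (EY - EX) ∂μ := integral_add hiX hi2
  have e2 : (∫ ω, (Y ω - X ω) + (EY - EX) ∂μ)
      = (∫ ω, Y ω - X ω ∂μ) + ∫ (_ : Ω), (EY - EX) ∂μ := integral_add hi1 (integrable_const _)
  have e3 : (∫ ω, Y ω - X ω ∂μ) = EY - EX := by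
    rw [integral_sub hY hX]
  have e4 : (∫ (_ : Ω), (EY - EX) ∂μ) = EY - EX := by simp
  rw [e1, e2, e3, e4] at hint
  nlinarith [hint, hEle, abs_nonneg (0:ℝ)]
end

section
/- Let X be a nonnegative integrable random variable with Pr(X = 0) ≥ 1/2, let A be an event on which X ≥ E(X) + c for some c > 0 with Pr(A) = q > 0, and let Y = X + c·1_A. If additionally X ≥ E(Y) on A, then SV(Y) − SV(X) ≥ (1/2)·(E(Y)^2 − E(X)^2) ≥ E(X)·c·q. -/
/-!
On `A` the variable `X` already lies above its mean, so it contributes nothing to `SV(X)`; off `A`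
we have `Y = X`, and raising the mean from `E(X)` to `E(Y)` only deepens every shortfall. Hence the
downside square of `Y` dominates that of `X` pointwise. On `{X = 0}`, which misses `A`, the gap is
exactly `E(Y)² - E(X)²`, and this set has probability at least `1/2`. Finally
`E(Y) = E(X) + cq` gives `E(Y)² - E(X)² ≥ 2 E(X) c q`.
-/

open MeasureTheory

namespace SemivarianceIncrease

lemma sq_min_sub_zero_le_of_le (x : ℝ) {m m' : ℝ} (hm : m ≤ m') :
    min (x - m) 0 ^ 2 ≤ min (x - m') 0 ^ 2 := by
  have h₁ : min (x - m') 0 ≤ min (x - m) 0 := min_le_min (by linarith) le_rfl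
  have h₂ : min (x - m) 0 ≤ 0 := min_le_right _ _
  nlinarith

lemma sq_min_sub_zero_le_of_eq_or_le {x y m m' : ℝ} (hm : m ≤ m') (h : y = x ∨ m ≤ x) :
    min (x - m) 0 ^ 2 ≤ min (y - m') 0 ^ 2 := by
  rcases h with rfl | hx
  · exact sq_min_sub_zero_le_of_le y hm
  · rw [min_eq_right (sub_nonneg.mpr hx), zero_pow two_ne_zero]
    positivity

lemma sq_min_sub_zero_le_add_indicator {Ω : Type*} {X : Ω → ℝ} {A : Set Ω} {c m m' : ℝ}
    (hm : m ≤ m') (hA : ∀ ω ∈ A, m ≤ X ω) (ω : Ω) :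
    min (X ω - m) 0 ^ 2 ≤ min (X ω + A.indicator (fun _ ↦ c) ω - m') 0 ^ 2 := by
  refine sq_min_sub_zero_le_of_eq_or_le hm ?_
  by_cases hω : ω ∈ A
  · exact .inr (hA ω hω)
  · exact .inl (by simp [hω])

variable {Ω : Type*} [MeasurableSpace Ω] {μ : Measure Ω}

noncomputable def semivariance (Z : Ω → ℝ) (μ : Measure Ω) : ℝ :=
  ∫ ω, min (Z ω - ∫ ω', Z ω' ∂μ) 0 ^ 2 ∂μ

lemma integrable_sq_min_sub_zero [IsFiniteMeasure μ] {Z : Ω → ℝ}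
    (hZ : AEStronglyMeasurable Z μ) (hZ₀ : ∀ᵐ ω ∂μ, 0 ≤ Z ω) {m : ℝ} (hm : 0 ≤ m) :
    Integrable (fun ω ↦ min (Z ω - m) 0 ^ 2) μ := by
  refine (integrable_const (m ^ 2)).mono'
    (((hZ.sub aestronglyMeasurable_const).inf aestronglyMeasurable_const).pow 2) ?_
  filter_upwards [hZ₀] with ω hω
  have h₁ : -m ≤ min (Z ω - m) 0 := le_min (by linarith) (by linarith)
  have h₂ : min (Z ω - m) 0 ≤ 0 := min_le_right _ _
  rw [Real.norm_eq_abs, abs_of_nonneg (sq_nonneg _)]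
  nlinarith

/-- Markov's inequality applied to the gap between the two downside squares, which on
`{X = 0} ∩ {Y = 0}` equals `E(Y)² - E(X)²`. -/
lemma mul_measureReal_le_semivariance_sub [IsFiniteMeasure μ] {X Y : Ω → ℝ}
    (hX : Integrable X μ) (hY : Integrable Y μ) (hX₀ : ∀ ω, 0 ≤ X ω) (hY₀ : ∀ ω, 0 ≤ Y ω)
    (hle : ∀ ω, min (X ω - ∫ ω', X ω' ∂μ) 0 ^ 2 ≤ min (Y ω - ∫ ω', Y ω' ∂μ) 0 ^ 2) :
    ((∫ ω, Y ω ∂μ) ^ 2 - (∫ ω, X ω ∂μ) ^ 2) * μ.real {ω | X ω = 0 ∧ Y ω = 0}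
      ≤ semivariance Y μ - semivariance X μ := by
  set EX := ∫ ω, X ω ∂μ
  set EY := ∫ ω, Y ω ∂μ
  have hEX : 0 ≤ EX := integral_nonneg hX₀
  have hEY : 0 ≤ EY := integral_nonneg hY₀
  have hgX := integrable_sq_min_sub_zero hX.1 (.of_forall hX₀) hEX
  have hgY := integrable_sq_min_sub_zero hY.1 (.of_forall hY₀) hEY
  have hgap : ∀ ω ∈ {ω | X ω = 0 ∧ Y ω = 0},
      min (Y ω - EY) 0 ^ 2 - min (X ω - EX) 0 ^ 2 = EY ^ 2 - EX ^ 2 := by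
    rintro ω ⟨hXω, hYω⟩
    rw [hXω, hYω, zero_sub, zero_sub, min_eq_left (neg_nonpos.mpr hEX),
      min_eq_left (neg_nonpos.mpr hEY), neg_sq, neg_sq]
  have hgap_nonneg : ∀ ω, 0 ≤ min (Y ω - EY) 0 ^ 2 - min (X ω - EX) 0 ^ 2 :=
    fun ω ↦ sub_nonneg.mpr (hle ω)
  rcases Set.eq_empty_or_nonempty {ω | X ω = 0 ∧ Y ω = 0} with hempty | ⟨ω₀, hω₀⟩
  · rw [hempty, measureReal_empty, mul_zero, semivariance, semivariance, ← integral_sub hgY hgX]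
    exact integral_nonneg hgap_nonneg
  have hd : 0 ≤ EY ^ 2 - EX ^ 2 := hgap ω₀ hω₀ ▸ hgap_nonneg ω₀
  calc (EY ^ 2 - EX ^ 2) * μ.real {ω | X ω = 0 ∧ Y ω = 0}
      ≤ (EY ^ 2 - EX ^ 2) * μ.real
          {ω | EY ^ 2 - EX ^ 2 ≤ min (Y ω - EY) 0 ^ 2 - min (X ω - EX) 0 ^ 2} :=
        mul_le_mul_of_nonneg_left
          (measureReal_mono fun ω hω ↦ Set.mem_ofPred.mpr (hgap ω hω).ge) hd
    _ ≤ ∫ ω, (min (Y ω - EY) 0 ^ 2 - min (X ω - EX) 0 ^ 2) ∂μ :=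
        mul_meas_ge_le_integral_of_nonneg (.of_forall hgap_nonneg) (hgY.sub hgX) _
    _ = semivariance Y μ - semivariance X μ := integral_sub hgY hgX

lemma integral_add_indicator_const [IsFiniteMeasure μ] {X : Ω → ℝ} (hX : Integrable X μ)
    {A : Set Ω} (hA : MeasurableSet A) (c : ℝ) :
    ∫ ω, (X ω + A.indicator (fun _ ↦ c) ω) ∂μ = ∫ ω, X ω ∂μ + μ.real A * c := by
  rw [integral_add hX ((integrable_const c).indicator hA), integral_indicator_const c hA,
    smul_eq_mul]

end SemivarianceIncrease

open SemivarianceIncrease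

theorem semivariance_increase_general {Ω : Type*} [MeasurableSpace Ω] (μ : Measure Ω)
    [IsProbabilityMeasure μ] (X : Ω → ℝ) (hX : Integrable X μ)
    (hpos : ∀ ω, 0 ≤ X ω)
    (hzero : (1/2 : ENNReal) ≤ μ {ω | X ω = 0})
    (A : Set Ω) (hA : MeasurableSet A) (q : ℝ) (hq : 0 < q)
    (hμA : μ A = ENNReal.ofReal q)
    (c : ℝ) (hc : 0 < c)
    (hAbig : ∀ ω ∈ A, (∫ ω', X ω' ∂μ) + c ≤ X ω)
    (Y : Ω → ℝ) (hYdef : Y = fun ω => X ω + A.indicator (fun _ => c) ω) :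
    (1/2) * ((∫ ω, Y ω ∂μ)^2 - (∫ ω, X ω ∂μ)^2)
        ≤ (∫ ω, (min (Y ω - ∫ ω', Y ω' ∂μ) 0)^2 ∂μ)
            - (∫ ω, (min (X ω - ∫ ω', X ω' ∂μ) 0)^2 ∂μ)
      ∧ (∫ ω, X ω ∂μ) * c * q
          ≤ (1/2) * ((∫ ω, Y ω ∂μ)^2 - (∫ ω, X ω ∂μ)^2) := by
  set EX := ∫ ω, X ω ∂μ
  have hEX : 0 ≤ EX := integral_nonneg hpos
  have hEY : ∫ ω, Y ω ∂μ = EX + c * q := by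
    rw [hYdef, integral_add_indicator_const hX hA, measureReal_def, hμA,
      ENNReal.toReal_ofReal hq.le, mul_comm]
  have hXA : ∀ ω ∈ A, EX ≤ X ω := fun ω hω ↦ by linarith [hAbig ω hω]
  have hY : Integrable Y μ := hYdef ▸ hX.add ((integrable_const c).indicator hA)
  have hY₀ : ∀ ω, 0 ≤ Y ω := fun ω ↦ hYdef ▸
    add_nonneg (hpos ω) (Set.indicator_nonneg (fun _ _ ↦ hc.le) ω)
  have hle : ∀ ω, min (X ω - EX) 0 ^ 2 ≤ min (Y ω - ∫ ω', Y ω' ∂μ) 0 ^ 2 := by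
    subst hYdef
    exact sq_min_sub_zero_le_add_indicator (hEY ▸ le_add_of_nonneg_right (mul_pos hc hq).le) hXA
  -- `X` vanishes nowhere on `A`, so `Y = X` on `{X = 0}`.
  have hzero_sub : {ω | X ω = 0} ⊆ {ω | X ω = 0 ∧ Y ω = 0} := by
    intro ω hω
    have hωA : ω ∉ A := fun hωA ↦ by linarith [hAbig ω hωA, Set.mem_ofPred.mp hω]
    exact ⟨hω, by simp [hYdef, hωA, Set.mem_ofPred.mp hω]⟩
  have hhalf : 1 / 2 ≤ μ.real {ω | X ω = 0 ∧ Y ω = 0} := by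
    have := ENNReal.toReal_mono (measure_ne_top μ _) (hzero.trans (measure_mono hzero_sub))
    simpa [measureReal_def] using this
  have hgap_nonneg : 0 ≤ (∫ ω, Y ω ∂μ) ^ 2 - EX ^ 2 := by rw [hEY]; nlinarith [mul_pos hc hq]
  refine ⟨?_, by rw [hEY]; nlinarith [mul_pos hc hq]⟩
  calc 1 / 2 * ((∫ ω, Y ω ∂μ) ^ 2 - EX ^ 2)
      ≤ ((∫ ω, Y ω ∂μ) ^ 2 - EX ^ 2) * μ.real {ω | X ω = 0 ∧ Y ω = 0} := by nlinarith
    _ ≤ semivariance Y μ - semivariance X μ :=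
        mul_measureReal_le_semivariance_sub hX hY hpos hY₀ hle

/-- For nonnegative X with Pr(X = 0) ≥ 1/2, an event A of probability q > 0 on which
    X ≥ E(X) + c, and Y = X + c·1_A with X ≥ E(Y) on A:
    SV(Y) - SV(X) ≥ (1/2)(E(Y)² - E(X)²) ≥ E(X)·c·q. -/
theorem semivariance_increase {Ω : Type*} [MeasurableSpace Ω] (μ : Measure Ω)
    [IsProbabilityMeasure μ] (X : Ω → ℝ) (hX : Integrable X μ)
    (hpos : ∀ ω, 0 ≤ X ω)
    (hzero : (1/2 : ENNReal) ≤ μ {ω | X ω = 0})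
    (A : Set Ω) (hA : MeasurableSet A) (q : ℝ) (hq : 0 < q)
    (hμA : μ A = ENNReal.ofReal q)
    (c : ℝ) (hc : 0 < c)
    (hAbig : ∀ ω ∈ A, (∫ ω', X ω' ∂μ) + c ≤ X ω)
    (Y : Ω → ℝ) (hYdef : Y = fun ω => X ω + A.indicator (fun _ => c) ω)
    (hAEY : ∀ ω ∈ A, (∫ ω', Y ω' ∂μ) ≤ X ω) :
    (1/2) * ((∫ ω, Y ω ∂μ)^2 - (∫ ω, X ω ∂μ)^2)
        ≤ (∫ ω, (min (Y ω - ∫ ω', Y ω' ∂μ) 0)^2 ∂μ)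
            - (∫ ω, (min (X ω - ∫ ω', X ω' ∂μ) 0)^2 ∂μ)
      ∧ (∫ ω, X ω ∂μ) * c * q
          ≤ (1/2) * ((∫ ω, Y ω ∂μ)^2 - (∫ ω, X ω ∂μ)^2) :=
  semivariance_increase_general μ X hX hpos hzero A hA q hq hμA c hc hAbig Y hYdef
end

section
/- Let X be a nonnegative integrable random variable with Pr(X = 0) ≥ 1/2, E(X) ≥ k for some k > 0, let λ > 1/k, let A be an event with Pr(A) = q > 0 on which X ≥ E(X) + c·q + c for some c ∈ (0, 1], and let Y = X + c·1_A. If X ≥ E(Y) on A, then the semivariance-penalized expectations satisfy E(Y) − λ·SV(Y) < E(X) − λ·SV(X). -/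
open MeasureTheory

/-!
Let `m = E X`. Adding `c` on `A` raises the mean by `c q`, but `A` lies above `m`, so no deficit
below the mean shrinks; on the atom `{X = 0}`, of probability at least `1/2`, the squared deficit
grows from `m²` to `(m + c q)²`. So the semivariance grows by at least `m c q ≥ k c q`, and
`λ k > 1` makes this penalty outweigh the gain `c q` in the mean.
-/

section

variable {Ω : Type*} [MeasurableSpace Ω]

noncomputable def semivariance (X : Ω → ℝ) (μ : Measure Ω) : ℝ :=
  ∫ ω, (min (X ω - ∫ ω', X ω' ∂μ) 0) ^ 2 ∂μ

variable {μ : Measure Ω}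

lemma sq_min_sub_zero_eq_zero {x t : ℝ} (h : t ≤ x) : (min (x - t) 0) ^ 2 = 0 := by
  simp [min_eq_right (sub_nonneg.2 h)]

lemma sq_min_sub_zero_mono {x s t : ℝ} (h : s ≤ t) :
    (min (x - s) 0) ^ 2 ≤ (min (x - t) 0) ^ 2 := by
  have hst : min (x - t) 0 ≤ min (x - s) 0 := min_le_min_right 0 (by linarith)
  nlinarith [min_le_right (x - s) 0]

lemma sq_min_zero_sub {t : ℝ} (ht : 0 ≤ t) : (min (0 - t) 0) ^ 2 = t ^ 2 := by
  simp [min_eq_left (neg_nonpos.2 ht)]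

lemma sq_min_sub_zero_le_sq {x t : ℝ} (hx : 0 ≤ x) : (min (x - t) 0) ^ 2 ≤ t ^ 2 := by
  rcases le_total t x with h | h
  · rw [sq_min_sub_zero_eq_zero h]; positivity
  · rw [min_eq_left (by linarith)]; nlinarith

lemma integrable_sq_min_sub_zero [IsFiniteMeasure μ] {X : Ω → ℝ}
    (hX : AEStronglyMeasurable X μ) (hX0 : ∀ ω, 0 ≤ X ω) (t : ℝ) :
    Integrable (fun ω ↦ (min (X ω - t) 0) ^ 2) μ := by
  refine (integrable_const (t ^ 2)).mono' ?_ (.of_forall fun ω ↦ ?_)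
  · exact (continuous_id.sub continuous_const |>.min continuous_const |>.pow 2)
      |>.comp_aestronglyMeasurable hX
  · rw [Real.norm_of_nonneg (sq_nonneg _)]
    exact sq_min_sub_zero_le_sq (hX0 ω)

theorem mul_measureReal_le_semivariance_sub [IsFiniteMeasure μ] {X Y : Ω → ℝ}
    (hX : Integrable X μ) (hY : Integrable Y μ) (hX0 : ∀ ω, 0 ≤ X ω) (hY0 : ∀ ω, 0 ≤ Y ω)
    (hmean : ∫ ω, X ω ∂μ ≤ ∫ ω, Y ω ∂μ) (hXY : ∀ ω, Y ω ≠ X ω → ∫ ω', X ω' ∂μ < X ω) :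
    ((∫ ω, Y ω ∂μ) ^ 2 - (∫ ω, X ω ∂μ) ^ 2) * μ.real {ω | X ω = 0}
      ≤ semivariance Y μ - semivariance X μ := by
  set m := ∫ ω, X ω ∂μ
  set m' := ∫ ω, Y ω ∂μ
  have hm : 0 ≤ m := integral_nonneg hX0
  have hS : NullMeasurableSet {ω | X ω = 0} μ :=
    hX.aemeasurable.nullMeasurableSet_preimage (measurableSet_singleton 0)
  have pointwise : ∀ ω, {ω | X ω = 0}.indicator (fun _ ↦ m' ^ 2 - m ^ 2) ω
      ≤ (min (Y ω - m') 0) ^ 2 - (min (X ω - m) 0) ^ 2 := by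
    intro ω
    by_cases hYX : Y ω = X ω
    · have hmono := sq_min_sub_zero_mono (x := X ω) hmean
      by_cases hX0ω : X ω = 0
      · rw [Set.indicator_of_mem (show ω ∈ {ω | X ω = 0} from hX0ω), hYX, hX0ω,
          sq_min_zero_sub hm, sq_min_zero_sub (hm.trans hmean)]
      · rw [Set.indicator_of_notMem (show ω ∉ {ω | X ω = 0} from hX0ω), hYX]
        linarith
    · have hlt := hXY ω hYX
      rw [Set.indicator_of_notMem (show ω ∉ {ω | X ω = 0} from (hm.trans_lt hlt).ne'),
        sq_min_sub_zero_eq_zero hlt.le, sub_zero]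
      positivity
  have hfY := integrable_sq_min_sub_zero hY.1 hY0 m'
  have hfX := integrable_sq_min_sub_zero hX.1 hX0 m
  calc (m' ^ 2 - m ^ 2) * μ.real {ω | X ω = 0}
      = ∫ ω, {ω | X ω = 0}.indicator (fun _ ↦ m' ^ 2 - m ^ 2) ω ∂μ := by
        rw [integral_indicator₀ hS, setIntegral_const, smul_eq_mul, mul_comm]
    _ ≤ ∫ ω, ((min (Y ω - m') 0) ^ 2 - (min (X ω - m) 0) ^ 2) ∂μ :=
        integral_mono ((integrable_const _).indicator₀ hS) (hfY.sub hfX) pointwise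
    _ = semivariance Y μ - semivariance X μ :=
        integral_sub hfY hfX

end

theorem svpe_strictly_decreases_general {Ω : Type*} [MeasurableSpace Ω] (μ : Measure Ω)
    [IsProbabilityMeasure μ] (X : Ω → ℝ) (hX : Integrable X μ)
    (hpos : ∀ ω, 0 ≤ X ω)
    (hzero : (1/2 : ENNReal) ≤ μ {ω | X ω = 0})
    (k : ℝ) (hk : 0 < k) (hEk : k ≤ ∫ ω, X ω ∂μ)
    (lam : ℝ) (hlam : 1 / k < lam)
    (A : Set Ω) (hA : MeasurableSet A) (q : ℝ) (hq : 0 < q)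
    (hμA : μ A = ENNReal.ofReal q)
    (c : ℝ) (hc : c ∈ Set.Ioc (0:ℝ) 1)
    (Y : Ω → ℝ) (hYdef : Y = fun ω => X ω + A.indicator (fun _ => c) ω)
    (hAEY : ∀ ω ∈ A, (∫ ω', Y ω' ∂μ) ≤ X ω) :
    (∫ ω, Y ω ∂μ) - lam * (∫ ω, (min (Y ω - ∫ ω', Y ω' ∂μ) 0)^2 ∂μ)
      < (∫ ω, X ω ∂μ) - lam * (∫ ω, (min (X ω - ∫ ω', X ω' ∂μ) 0)^2 ∂μ) := by
  change _ - lam * semivariance Y μ < _ - lam * semivariance X μ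
  set m := ∫ ω, X ω ∂μ
  have hcq : 0 < c * q := mul_pos hc.1 hq
  have hbump : Integrable (A.indicator fun _ ↦ c) μ := (integrable_const c).indicator hA
  have hEY : ∫ ω, Y ω ∂μ = m + c * q := by
    rw [hYdef, integral_add hX hbump, integral_indicator_const c hA, measureReal_def, hμA,
      ENNReal.toReal_ofReal hq.le, smul_eq_mul, mul_comm]
  have hY0 : ∀ ω, 0 ≤ Y ω := fun ω ↦ hYdef ▸
    add_nonneg (hpos ω) (Set.indicator_nonneg (fun _ _ ↦ hc.1.le) ω)
  have hYX : ∀ ω, Y ω ≠ X ω → m < X ω := fun ω hne ↦ by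
    have hωA : ω ∈ A := by_contra fun hωA ↦ hne (by simp [hYdef, hωA])
    linarith [hAEY ω hωA]
  have hSV := mul_measureReal_le_semivariance_sub hX (hYdef ▸ hX.add hbump) hpos hY0
    (by linarith) hYX
  have hhalf : 1 / 2 ≤ μ.real {ω | X ω = 0} := by
    simpa [measureReal_def] using ENNReal.toReal_mono (measure_ne_top _ _) hzero
  rw [hEY] at hSV ⊢
  have hgain : k * (c * q) ≤ semivariance Y μ - semivariance X μ :=
    calc k * (c * q) ≤ ((m + c * q) ^ 2 - m ^ 2) * (1 / 2) := by nlinarith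
      _ ≤ ((m + c * q) ^ 2 - m ^ 2) * μ.real {ω | X ω = 0} := by gcongr; nlinarith
      _ ≤ _ := hSV
  have hlamk : 1 < lam * k := by rwa [div_lt_iff₀ hk] at hlam
  have hlam0 : 0 < lam := (one_div_pos.2 hk).trans hlam
  linarith [mul_le_mul_of_nonneg_left hgain hlam0.le, mul_lt_mul_of_pos_right hlamk hcq]

/-- For nonnegative X with Pr(X = 0) ≥ 1/2, E(X) ≥ k > 0, λ > 1/k, an event A of
    probability q > 0 on which X ≥ E(X) + cq + c with c ∈ (0,1], and Y = X + c·1_A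
    with X ≥ E(Y) on A, the semivariance-penalized expectation of Y is strictly
    smaller than that of X. -/
theorem svpe_strictly_decreases {Ω : Type*} [MeasurableSpace Ω] (μ : Measure Ω)
    [IsProbabilityMeasure μ] (X : Ω → ℝ) (hX : Integrable X μ)
    (hpos : ∀ ω, 0 ≤ X ω)
    (hzero : (1/2 : ENNReal) ≤ μ {ω | X ω = 0})
    (k : ℝ) (hk : 0 < k) (hEk : k ≤ ∫ ω, X ω ∂μ)
    (lam : ℝ) (hlam : 1 / k < lam)
    (A : Set Ω) (hA : MeasurableSet A) (q : ℝ) (hq : 0 < q)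
    (hμA : μ A = ENNReal.ofReal q)
    (c : ℝ) (hc : c ∈ Set.Ioc (0:ℝ) 1)
    (hAbig : ∀ ω ∈ A, (∫ ω', X ω' ∂μ) + c * q + c ≤ X ω)
    (Y : Ω → ℝ) (hYdef : Y = fun ω => X ω + A.indicator (fun _ => c) ω)
    (hAEY : ∀ ω ∈ A, (∫ ω', Y ω' ∂μ) ≤ X ω) :
    (∫ ω, Y ω ∂μ) - lam * (∫ ω, (min (Y ω - ∫ ω', Y ω' ∂μ) 0)^2 ∂μ)
      < (∫ ω, X ω ∂μ) - lam * (∫ ω, (min (X ω - ∫ ω', X ω' ∂μ) 0)^2 ∂μ) :=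
  svpe_strictly_decreases_general μ X hX hpos hzero k hk hEk lam hlam A hA q hq hμA c hc Y hYdef
    hAEY
end
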